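/- arXiv:2312.10137 — 2 statements merged into one kernel-verified Lean document; each statement's English description precedes it below -/
import Mathlib

section
/- Let N = (V, E, c) be a nesting balanced network with boundary vertices ∂V ⊆ V, and let I, J ⊆ ∂V be disjoint. Then the cycle-flow entropy satisfies subadditivity: S(I) + S(J) ≥ S(I ∪ J). -/
open scoped Classical

/-- An edge cycle: a nonempty cyclically ordered sequence of distinct directed
edges (each a source-target pair) with the target of each edge equal to the
source of the next (cyclically). -/
structure EdgeCycle (V : Type*) where
  n : ℕ
  npos : 0 < n
  edge : Fin n → V × V
  inj : Function.Injective edge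
  chain : ∀ i : Fin n, (edge i).2 = (edge ⟨(i.val + 1) % n, Nat.mod_lt _ npos⟩).1

/-- Membership of a directed edge in an edge cycle. -/
def EdgeCycle.Mem {V : Type*} (C : EdgeCycle V) (e : V × V) : Prop :=
  ∃ i, C.edge i = e

/-- The cycle visits a vertex of `S`: some edge of the cycle has its target in `S`. -/
def EdgeCycle.Visits {V : Type*} (C : EdgeCycle V) (S : Finset V) : Prop :=
  ∃ i, (C.edge i).2 ∈ S

/-- A simple cycle flow: an edge cycle together with a nonnegative flux. -/
structure CycleFlow (V : Type*) where
  cyc : EdgeCycle V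
  flux : ℝ
  flux_nonneg : 0 ≤ flux

/-- The total load that a finite family of simple cycle flows places on the
directed edge `(u, v)`. -/
noncomputable def edgeLoad {V : Type*} (F : List (CycleFlow V)) (u v : V) : ℝ :=
  (F.map (fun C => if C.cyc.Mem (u, v) then C.flux else 0)).sum

/-- A finite family of simple cycle flows is a multi-cycle flow on the network
with capacity function `c` if on every edge the total load is at most the capacity. -/
def Feasible {V : Type*} (c : V → V → ℝ) (F : List (CycleFlow V)) : Prop :=
  ∀ u v, edgeLoad F u v ≤ c u v

/-- The flux of a multi-cycle flow between two (disjoint) vertex sets `I` and `J`: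
the sum of the fluxes of those simple cycle flows visiting both a vertex of `I`
and a vertex of `J`. -/
noncomputable def mflux {V : Type*} (F : List (CycleFlow V)) (I J : Finset V) : ℝ :=
  (F.map (fun C => if C.cyc.Visits I ∧ C.cyc.Visits J then C.flux else 0)).sum

/-- The cycle-flow entropy of a subset `I` of the boundary vertices `bdry`:
the maximal flux between `I` and its boundary complement over all
multi-cycle flows. -/
noncomputable def entropy {V : Type*} (c : V → V → ℝ) (bdry I : Finset V) : ℝ :=
  sSup { x | ∃ F : List (CycleFlow V), Feasible c F ∧ mflux F I (bdry \ I) = x }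

/-- A network is balanced if at every vertex the total capacity of ingoing edges
equals the total capacity of outgoing edges. -/
def BalancedNet {V : Type*} [Fintype V] (c : V → V → ℝ) : Prop :=
  ∀ v : V, (∑ u, c u v) = ∑ u, c v u

/-- The residual capacity function of a network `c` with respect to a
multi-cycle flow `F`. -/
noncomputable def resid {V : Type*} (c : V → V → ℝ) (F : List (CycleFlow V)) : V → V → ℝ :=
  fun u v => c u v - edgeLoad F u v

/-- `F'` is a multi-cycle subflow of `F`: same edge cycles, smaller fluxes. -/
def Subflow {V : Type*} (F' F : List (CycleFlow V)) : Prop :=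
  List.Forall₂ (fun C' C => C'.cyc = C.cyc ∧ C'.flux ≤ C.flux) F' F

/-- The nesting property: for every pair of disjoint boundary subsets `I`, `J`
there is a single multi-cycle flow simultaneously maximizing the flux through
`I` and through `I ∪ J`. -/
def Nesting {V : Type*} (c : V → V → ℝ) (bdry : Finset V) : Prop :=
  ∀ I J : Finset V, I ⊆ bdry → J ⊆ bdry → Disjoint I J →
    ∃ F : List (CycleFlow V), Feasible c F ∧
      mflux F I (bdry \ I) = entropy c bdry I ∧
      mflux F (I ∪ J) (bdry \ (I ∪ J)) = entropy c bdry (I ∪ J)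

/-!
The nesting property yields one multi-cycle flow `F` realising both `S(I)` and `S(I ∪ J)`.
A cycle visiting `I ∪ J` and its boundary complement visits `I` and its complement or `J` and
its complement, so the flux of `F` through `I ∪ J` is at most its flux through `I` plus its flux
through `J`; the latter is at most `S(J)`.
-/

section

variable {V : Type*}

lemma EdgeCycle.Visits.mono {C : EdgeCycle V} {S T : Finset V} (hST : S ⊆ T)
    (h : C.Visits S) : C.Visits T :=
  let ⟨i, hi⟩ := h; ⟨i, hST hi⟩

lemma EdgeCycle.visits_or_visits_of_visits_union [DecidableEq V] (C : EdgeCycle V)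
    {I J bdry : Finset V} (hIJ : C.Visits (I ∪ J)) (hout : C.Visits (bdry \ (I ∪ J))) :
    C.Visits I ∧ C.Visits (bdry \ I) ∨ C.Visits J ∧ C.Visits (bdry \ J) := by
  obtain ⟨i, hi⟩ := hIJ
  rcases Finset.mem_union.1 hi with hiI | hiJ
  · exact .inl ⟨⟨i, hiI⟩, hout.mono (Finset.sdiff_subset_sdiff le_rfl Finset.subset_union_left)⟩
  · exact .inr ⟨⟨i, hiJ⟩, hout.mono (Finset.sdiff_subset_sdiff le_rfl Finset.subset_union_right)⟩

lemma CycleFlow.flux_le_sum_edges [Fintype V] (C : CycleFlow V) :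
    C.flux ≤ ∑ p : V × V, if C.cyc.Mem p then C.flux else 0 := by
  have h₀ : C.cyc.Mem (C.cyc.edge ⟨0, C.cyc.npos⟩) := ⟨_, rfl⟩
  calc C.flux = if C.cyc.Mem (C.cyc.edge ⟨0, C.cyc.npos⟩) then C.flux else 0 := (if_pos h₀).symm
    _ ≤ _ := Finset.single_le_sum (f := fun p => if C.cyc.Mem p then C.flux else 0)
      (fun p _ => by split_ifs <;> simp [C.flux_nonneg]) (Finset.mem_univ _)

lemma mflux_union_le [DecidableEq V] (F : List (CycleFlow V)) (I J bdry : Finset V) :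
    mflux F (I ∪ J) (bdry \ (I ∪ J)) ≤ mflux F I (bdry \ I) + mflux F J (bdry \ J) := by
  rw [mflux, mflux, mflux, ← List.sum_map_add]
  refine List.sum_le_sum fun C _ => ?_
  have := C.flux_nonneg
  split_ifs with hU <;> try linarith
  rcases C.cyc.visits_or_visits_of_visits_union hU.1 hU.2 with h | h <;> contradiction

lemma mflux_le_sum_edgeLoad [Fintype V] (F : List (CycleFlow V)) (I J : Finset V) :
    mflux F I J ≤ ∑ p : V × V, edgeLoad F p.1 p.2 := by
  induction F with
  | nil => simp [mflux, edgeLoad]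
  | cons C F ih =>
    have hC : (if C.cyc.Visits I ∧ C.cyc.Visits J then C.flux else 0) ≤ C.flux := by
      split_ifs <;> simp [C.flux_nonneg]
    simp only [mflux, edgeLoad, List.map_cons, List.sum_cons, Finset.sum_add_distrib] at ih ⊢
    linarith [C.flux_le_sum_edges]

lemma entropy_bddAbove [Fintype V] (c : V → V → ℝ) (bdry I : Finset V) :
    BddAbove {x | ∃ F : List (CycleFlow V), Feasible c F ∧ mflux F I (bdry \ I) = x} := by
  refine ⟨∑ p : V × V, c p.1 p.2, ?_⟩
  rintro x ⟨F, hF, rfl⟩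
  exact (mflux_le_sum_edgeLoad F _ _).trans (Finset.sum_le_sum fun p _ => hF p.1 p.2)

lemma mflux_le_entropy [Fintype V] {c : V → V → ℝ} {F : List (CycleFlow V)} (hF : Feasible c F)
    (bdry I : Finset V) : mflux F I (bdry \ I) ≤ entropy c bdry I :=
  le_csSup (entropy_bddAbove c bdry I) ⟨F, hF, rfl⟩

end

theorem stmt6_general {V : Type*} [Fintype V] [DecidableEq V] (c : V → V → ℝ)
    (bdry : Finset V) (hnest : Nesting c bdry) (I J : Finset V) (hI : I ⊆ bdry) (hJ : J ⊆ bdry)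
    (hIJ : Disjoint I J) :
    entropy c bdry (I ∪ J) ≤ entropy c bdry I + entropy c bdry J := by
  -- `Nesting` is stated with classical decidable equality.
  obtain rfl : ‹DecidableEq V› = fun a b => Classical.propDecidable (a = b) := Subsingleton.elim _ _
  obtain ⟨F, hF, hFI, hFIJ⟩ := hnest I J hI hJ hIJ
  calc entropy c bdry (I ∪ J) = mflux F (I ∪ J) (bdry \ (I ∪ J)) := hFIJ.symm
    _ ≤ mflux F I (bdry \ I) + mflux F J (bdry \ J) := mflux_union_le F I J bdry
    _ ≤ entropy c bdry I + entropy c bdry J := by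
      rw [hFI]
      exact add_le_add_right (mflux_le_entropy hF bdry J) _

/-- Subadditivity of the cycle-flow entropy on a nesting balanced network. -/
theorem stmt6 {V : Type*} [Fintype V] [DecidableEq V] (c : V → V → ℝ)
    (hc : ∀ u v, 0 ≤ c u v) (bdry : Finset V) (hbal : BalancedNet c)
    (hnest : Nesting c bdry) (I J : Finset V) (hI : I ⊆ bdry) (hJ : J ⊆ bdry)
    (hIJ : Disjoint I J) :
    entropy c bdry (I ∪ J) ≤ entropy c bdry I + entropy c bdry J :=
  stmt6_general c bdry hnest I J hI hJ hIJ
end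

section
/- Let N be the directed 4-cycle network with vertices A, B, C, O, edges A → B, B → C, C → O, O → A each of capacity 1, and all four vertices boundary vertices. Then S({A}) = S({B}) = S({C}) = S({A,B}) = S({A,C}) = S({B,C}) = S({A,B,C}) = 1, and consequently the monogamy of mutual information fails for this network: S({A,B}) + S({A,C}) + S({B,C}) < S({A}) + S({B}) + S({C}) + S({A,B,C}). -/
open scoped Classical

/-- The directed `n`-cycle network: an edge `i → i + 1 (mod n)` of capacity `1`
for each vertex `i`.  For `n = 4` this is the network with vertices
`A = 0, B = 1, C = 2, O = 3` and edges `A → B, B → C, C → O, O → A` of capacity 1. -/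
noncomputable def cycleCap (n : ℕ) : Fin n → Fin n → ℝ :=
  fun i j => if j.val = (i.val + 1) % n then 1 else 0


/-! On the directed `n`-cycle every edge has capacity `0` except the successor edges `i → i + 1`,
so a cycle carrying positive flux consists of successor edges only. Following successor edges
from any vertex reaches every vertex, so such a cycle is the whole `n`-cycle and, in particular,
uses the edge `0 → 1`. Hence the flux of a multi-cycle flow between any two sets is at most the
load on `0 → 1`, which is at most `1`; the full `n`-cycle with flux `1` attains this bound for
every nonempty `I` with nonempty complement. With all seven entropies equal to `1`, monogamy of
mutual information would demand `3 ≥ 4`. -/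

open Finset

section Network

variable {V : Type*}

theorem CycleFlow.flux_le_edgeLoad {F : List (CycleFlow V)} {C : CycleFlow V} (hC : C ∈ F)
    {u v : V} (hm : C.cyc.Mem (u, v)) : C.flux ≤ edgeLoad F u v := by
  refine List.single_le_sum ?_ _ (List.mem_map.mpr ⟨C, hC, if_pos hm⟩)
  intro x hx
  obtain ⟨D, -, rfl⟩ := List.mem_map.mp hx
  split_ifs
  exacts [D.flux_nonneg, le_rfl]

theorem Feasible.capacity_pos_of_mem {c : V → V → ℝ} {F : List (CycleFlow V)}
    (hF : Feasible c F) {C : CycleFlow V} (hC : C ∈ F) (hpos : 0 < C.flux) {u v : V}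
    (hm : C.cyc.Mem (u, v)) : 0 < c u v :=
  hpos.trans_le ((CycleFlow.flux_le_edgeLoad hC hm).trans (hF u v))

theorem mflux_le_edgeLoad {F : List (CycleFlow V)} (I J : Finset V) {u v : V}
    (h : ∀ C ∈ F, 0 < C.flux → C.cyc.Mem (u, v)) : mflux F I J ≤ edgeLoad F u v := by
  refine List.sum_le_sum fun C hC => ?_
  rcases C.flux_nonneg.eq_or_lt with h0 | hpos
  · simp [← h0]
  · rw [if_pos (h C hC hpos)]
    split_ifs
    exacts [le_rfl, C.flux_nonneg]

theorem entropy_eq_of_forall_le {c : V → V → ℝ} {bdry I : Finset V} {b : ℝ}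
    (hle : ∀ F, Feasible c F → mflux F I (bdry \ I) ≤ b)
    (hex : ∃ F, Feasible c F ∧ mflux F I (bdry \ I) = b) : entropy c bdry I = b :=
  IsGreatest.csSup_eq ⟨hex, by rintro _ ⟨F, hF, rfl⟩; exact hle F hF⟩

end Network

namespace EdgeCycle

open Fin.NatCast

variable {n : ℕ} [NeZero n]

theorem source_mod_eq_add (C : EdgeCycle (Fin n))
    (h : ∀ i, (C.edge i).2 = (C.edge i).1 + 1) (k : ℕ) :
    (C.edge ⟨k % C.n, Nat.mod_lt _ C.npos⟩).1 = (C.edge ⟨0, C.npos⟩).1 + (k : Fin n) := by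
  induction k with
  | zero => simp
  | succ k ih =>
    have hnext := C.chain ⟨k % C.n, Nat.mod_lt _ C.npos⟩
    simp only [Nat.mod_add_mod] at hnext
    rw [← hnext, h, ih, Nat.cast_succ, add_assoc]

theorem mem_of_forall_succ (C : EdgeCycle (Fin n))
    (h : ∀ i, (C.edge i).2 = (C.edge i).1 + 1) (v : Fin n) : C.Mem (v, v + 1) := by
  refine ⟨⟨(v - (C.edge ⟨0, C.npos⟩).1).val % C.n, Nat.mod_lt _ C.npos⟩, ?_⟩
  have hsource := C.source_mod_eq_add h (v - (C.edge ⟨0, C.npos⟩).1).val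
  rw [Fin.cast_val_eq_self, add_sub_cancel] at hsource
  exact Prod.ext hsource (by rw [h, hsource])

variable (n) in
def succCycle : EdgeCycle (Fin n) where
  n := n
  npos := Nat.pos_of_neZero n
  edge i := (i, i + 1)
  inj _ _ h := congrArg Prod.fst h
  chain i := by simp [Fin.ext_iff, Fin.val_add]

theorem succCycle_mem_iff {u v : Fin n} : (succCycle n).Mem (u, v) ↔ v = u + 1 := by
  simp [Mem, succCycle, eq_comm]

theorem succCycle_visits {S : Finset (Fin n)} {v : Fin n} (hv : v ∈ S) :
    (succCycle n).Visits S :=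
  ⟨(v - 1 : Fin n), by simpa [succCycle] using hv⟩

end EdgeCycle

section DirectedCycle

variable {n : ℕ} [NeZero n]

theorem cycleCap_apply (u v : Fin n) : cycleCap n u v = if v = u + 1 then 1 else 0 := by
  simp only [cycleCap, Fin.ext_iff, Fin.val_add, Fin.val_one', Nat.add_mod_mod]

theorem Feasible.mem_of_cycleCap {F : List (CycleFlow (Fin n))} (hF : Feasible (cycleCap n) F)
    {C : CycleFlow (Fin n)} (hC : C ∈ F) (hpos : 0 < C.flux) (v : Fin n) :
    C.cyc.Mem (v, v + 1) := by
  refine C.cyc.mem_of_forall_succ (fun i => ?_) v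
  have hcap := hF.capacity_pos_of_mem hC hpos ⟨i, rfl⟩
  rw [cycleCap_apply] at hcap
  split_ifs at hcap with hsucc
  exacts [hsucc, (lt_irrefl _ hcap).elim]

theorem mflux_le_one_of_cycleCap {F : List (CycleFlow (Fin n))} (hF : Feasible (cycleCap n) F)
    (I J : Finset (Fin n)) : mflux F I J ≤ 1 :=
  calc mflux F I J ≤ edgeLoad F 0 1 :=
        mflux_le_edgeLoad I J fun C hC hpos => by simpa using hF.mem_of_cycleCap hC hpos 0
    _ ≤ cycleCap n 0 1 := hF 0 1
    _ = 1 := by simp [cycleCap_apply]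

theorem feasible_succCycle :
    Feasible (cycleCap n) [⟨EdgeCycle.succCycle n, 1, zero_le_one⟩] := by
  intro u v
  simp [edgeLoad, EdgeCycle.succCycle_mem_iff, cycleCap_apply]

theorem entropy_cycleCap {bdry I : Finset (Fin n)} (hI : I.Nonempty) (hIc : ¬bdry ⊆ I) :
    entropy (cycleCap n) bdry I = 1 := by
  obtain ⟨u, hu⟩ := hI
  obtain ⟨v, hv, hvI⟩ := not_subset.mp hIc
  refine entropy_eq_of_forall_le (fun _ hF => mflux_le_one_of_cycleCap hF _ _)
    ⟨_, feasible_succCycle, ?_⟩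
  simp only [mflux, List.map_cons, List.map_nil, List.sum_cons, List.sum_nil, add_zero]
  -- `bdry \ I` inside `entropy` uses classical decidable equality, hence the `convert`.
  exact if_pos ⟨EdgeCycle.succCycle_visits hu,
    EdgeCycle.succCycle_visits (by convert mem_sdiff.mpr ⟨hv, hvI⟩)⟩

end DirectedCycle

/-- On the directed 4-cycle (GHZ) network all seven subsystem entropies equal `1`,
and monogamy of mutual information fails. -/
theorem stmt13 :
    entropy (cycleCap 4) Finset.univ ({0} : Finset (Fin 4)) = 1 ∧
    entropy (cycleCap 4) Finset.univ ({1} : Finset (Fin 4)) = 1 ∧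
    entropy (cycleCap 4) Finset.univ ({2} : Finset (Fin 4)) = 1 ∧
    entropy (cycleCap 4) Finset.univ ({0, 1} : Finset (Fin 4)) = 1 ∧
    entropy (cycleCap 4) Finset.univ ({0, 2} : Finset (Fin 4)) = 1 ∧
    entropy (cycleCap 4) Finset.univ ({1, 2} : Finset (Fin 4)) = 1 ∧
    entropy (cycleCap 4) Finset.univ ({0, 1, 2} : Finset (Fin 4)) = 1 ∧
    entropy (cycleCap 4) Finset.univ ({0, 1} : Finset (Fin 4)) +
        entropy (cycleCap 4) Finset.univ ({0, 2} : Finset (Fin 4)) +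
        entropy (cycleCap 4) Finset.univ ({1, 2} : Finset (Fin 4)) <
      entropy (cycleCap 4) Finset.univ ({0} : Finset (Fin 4)) +
        entropy (cycleCap 4) Finset.univ ({1} : Finset (Fin 4)) +
        entropy (cycleCap 4) Finset.univ ({2} : Finset (Fin 4)) +
        entropy (cycleCap 4) Finset.univ ({0, 1, 2} : Finset (Fin 4)) := by
  have h : ∀ I : Finset (Fin 4), I.Nonempty → ¬univ ⊆ I →
      entropy (cycleCap 4) univ I = 1 := fun _ => entropy_cycleCap
  have h0 := h {0} (by decide) (by decide)
  have h1 := h {1} (by decide) (by decide)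
  have h2 := h {2} (by decide) (by decide)
  have h01 := h {0, 1} (by decide) (by decide)
  have h02 := h {0, 2} (by decide) (by decide)
  have h12 := h {1, 2} (by decide) (by decide)
  have h012 := h {0, 1, 2} (by decide) (by decide)
  refine ⟨h0, h1, h2, h01, h02, h12, h012, ?_⟩
  rw [h0, h1, h2, h01, h02, h12, h012]
  norm_num
end
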